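/- Let F ∈ F_q[x_1,…,x_N] be a polynomial of degree d > 1, let t ∈ \bar{F_q}, and let F̂_t ∈ \bar{F_q}[x_1,…,x_N,Z] denote the homogenization of F − t with respect to the extra variable Z. Then R(F) ≤ R(F̂_t) ≤ R(F) + 1. -/

import Mathlib

/-!
Write `Ĥ = homogenize d (F - t)` as `G(x) + Z · L(x, Z)`, where `G` is the degree-`d` part of
`F` and `deg L < d`. Substituting `Z = 0` is an algebra map that does not raise degrees and
sends `Ĥ` to `G`; such maps carry factorizations to factorizations, so `R(F) ≤ R(F̂_t)`.
Conversely, a factorization of `G` with the extra product `Z · L` is a factorization of `Ĥ`,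
so `R(F̂_t) ≤ R(F) + 1`.
-/

open MvPolynomial

/-- The rank of a homogeneous polynomial `G` of degree `d`: the minimal `r` such that
`G = ∑_{i=1}^r Q_i · P_i` with `deg Q_i < d` and `deg P_i < d`. -/
noncomputable def homRank {K : Type*} [Field K] {σ : Type*} (d : ℕ) (G : MvPolynomial σ K) : ℕ :=
  sInf {r : ℕ | ∃ Q P : Fin r → MvPolynomial σ K,
    (∀ i, (Q i).totalDegree < d ∧ (P i).totalDegree < d) ∧ G = ∑ i, Q i * P i}

/-- The rank `R(F)` of a polynomial `F` of degree `d` over a field: the rank of the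
degree-`d` homogeneous part of `F`, viewed over the algebraic closure. -/
noncomputable def polyRank {K : Type*} [Field K] {N : ℕ} (d : ℕ)
    (F : MvPolynomial (Fin N) K) : ℕ :=
  homRank d (MvPolynomial.map (algebraMap K (AlgebraicClosure K)) (homogeneousComponent d F))

/-- The degree-`d` homogenization `Ĥ(x_1, …, x_N, Z) = Z^d · H(x_1/Z, …, x_N/Z)` of a polynomial
`H` of degree at most `d`, where `Z` is the extra (last) variable. -/
noncomputable def homogenize {K : Type*} [CommRing K] {N : ℕ} (d : ℕ)
    (H : MvPolynomial (Fin N) K) : MvPolynomial (Fin (N + 1)) K :=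
  ∑ k ∈ Finset.range (d + 1),
    (X (Fin.last N)) ^ (d - k) * (rename Fin.castSucc (homogeneousComponent k H))

namespace MvPolynomial

variable {R σ τ : Type*}

lemma homogeneousComponent_map [CommSemiring R] {S : Type*} [CommSemiring S] (f : R →+* S)
    (n : ℕ) (p : MvPolynomial σ R) :
    homogeneousComponent n (map f p) = map f (homogeneousComponent n p) := by
  ext m
  simp only [coeff_homogeneousComponent, coeff_map]
  split_ifs <;> simp

lemma homogeneousComponent_sub_C [CommRing R] {n : ℕ} (hn : n ≠ 0) (p : MvPolynomial σ R)
    (c : R) : homogeneousComponent n (p - C c) = homogeneousComponent n p := by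
  rw [map_sub, homogeneousComponent_eq_zero n (C c) (by rw [totalDegree_C]; omega), sub_zero]

lemma totalDegree_aeval_le [CommSemiring R] {g : σ → MvPolynomial τ R}
    (hg : ∀ i, (g i).totalDegree ≤ 1) (p : MvPolynomial σ R) :
    (aeval g p).totalDegree ≤ p.totalDegree := by
  conv_lhs => rw [p.as_sum, map_sum]
  refine totalDegree_finsetSum_le fun m hm => (le_totalDegree hm).trans' ?_
  rw [aeval_monomial, ← C_eq_algebraMap]
  calc (C (coeff m p) * m.prod fun i k => g i ^ k).totalDegree
      ≤ (C (coeff m p) : MvPolynomial τ R).totalDegree +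
        ∑ i ∈ m.support, (g i ^ m i).totalDegree :=
        (totalDegree_mul _ _).trans (Nat.add_le_add_left (totalDegree_finsetProd _ _) _)
    _ ≤ 0 + ∑ i ∈ m.support, m i * 1 := by
        refine Nat.add_le_add (totalDegree_C _).le (Finset.sum_le_sum fun i _ => ?_)
        exact (totalDegree_pow _ _).trans (Nat.mul_le_mul_left _ (hg i))
    _ = m.sum fun _ e => e := by simp [Finsupp.sum]

end MvPolynomial

section homRank

variable {K σ τ : Type*} [Field K] {d : ℕ}

lemma exists_totalDegree_lt_mul_eq_monomial (hd : 1 < d) {m : σ →₀ ℕ} (hm : m.degree ≤ d)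
    (c : K) : ∃ Q P : MvPolynomial σ K,
      Q.totalDegree < d ∧ P.totalDegree < d ∧ monomial m c = Q * P := by
  rcases eq_or_ne m 0 with rfl | hm0
  · exact ⟨C c, 1, by rw [totalDegree_C]; omega, by rw [totalDegree_one]; omega,
      by rw [mul_one, C_apply]⟩
  obtain ⟨j, hj⟩ : ∃ j, m j ≠ 0 := by simpa [Finsupp.ext_iff] using hm0
  obtain ⟨s, rfl⟩ : ∃ s, m = s + Finsupp.single j 1 :=
    ⟨m - Finsupp.single j 1, (tsub_add_cancel_of_le
      (Finsupp.single_le_iff.mpr (Nat.one_le_iff_ne_zero.mpr hj))).symm⟩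
  rw [map_add, Finsupp.degree_single] at hm
  refine ⟨monomial s c, X j, (totalDegree_monomial_le s c).trans_lt ?_,
    by rw [totalDegree_X]; omega,
    by rw [monomial_add_single, pow_one]⟩
  exact lt_of_lt_of_le (Nat.lt_succ_self _) hm

lemma exists_eq_sum_mul_of_totalDegree_le (hd : 1 < d) {G : MvPolynomial σ K}
    (hG : G.totalDegree ≤ d) : ∃ r, ∃ Q P : Fin r → MvPolynomial σ K,
      (∀ i, (Q i).totalDegree < d ∧ (P i).totalDegree < d) ∧ G = ∑ i, Q i * P i := by
  choose Q P hQ hP hQP using fun m : G.support =>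
    exists_totalDegree_lt_mul_eq_monomial hd ((le_totalDegree m.2).trans hG) (coeff m G)
  let e := G.support.equivFin
  refine ⟨G.support.card, Q ∘ e.symm, P ∘ e.symm, fun i => ⟨hQ _, hP _⟩, ?_⟩
  calc G = ∑ m ∈ G.support, monomial m (coeff m G) := G.as_sum
    _ = ∑ m : G.support, Q m * P m := by
        rw [← Finset.sum_coe_sort]; exact Finset.sum_congr rfl fun m _ => hQP m
    _ = ∑ i, Q (e.symm i) * P (e.symm i) := (e.symm.sum_comp fun m => Q m * P m).symm

lemma homRank_le_of_eq_sum_mul {G : MvPolynomial σ K} {r : ℕ} (Q P : Fin r → MvPolynomial σ K)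
    (hQP : ∀ i, (Q i).totalDegree < d ∧ (P i).totalDegree < d) (hG : G = ∑ i, Q i * P i) :
    homRank d G ≤ r :=
  Nat.sInf_le ⟨Q, P, hQP, hG⟩

lemma exists_eq_sum_mul_homRank (hd : 1 < d) {G : MvPolynomial σ K} (hG : G.totalDegree ≤ d) :
    ∃ Q P : Fin (homRank d G) → MvPolynomial σ K,
      (∀ i, (Q i).totalDegree < d ∧ (P i).totalDegree < d) ∧ G = ∑ i, Q i * P i :=
  Nat.sInf_mem (exists_eq_sum_mul_of_totalDegree_le hd hG)

lemma homRank_map_le (hd : 1 < d) (φ : MvPolynomial σ K →ₐ[K] MvPolynomial τ K)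
    (hφ : ∀ p, (φ p).totalDegree ≤ p.totalDegree) {G : MvPolynomial σ K}
    (hG : G.totalDegree ≤ d) : homRank d (φ G) ≤ homRank d G := by
  obtain ⟨Q, P, hQP, hGQP⟩ := exists_eq_sum_mul_homRank hd hG
  refine homRank_le_of_eq_sum_mul (φ ∘ Q) (φ ∘ P)
    (fun i => ⟨(hφ _).trans_lt (hQP i).1, (hφ _).trans_lt (hQP i).2⟩) ?_
  rw [congrArg φ hGQP, map_sum]
  simp only [map_mul, Function.comp_apply]

lemma homRank_add_mul_le (hd : 1 < d) {G A B : MvPolynomial σ K} (hG : G.totalDegree ≤ d)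
    (hA : A.totalDegree < d) (hB : B.totalDegree < d) :
    homRank d (G + A * B) ≤ homRank d G + 1 := by
  obtain ⟨Q, P, hQP, hGQP⟩ := exists_eq_sum_mul_homRank hd hG
  refine homRank_le_of_eq_sum_mul (Fin.snoc Q A) (Fin.snoc P B) (fun i => ?_) ?_
  · induction i using Fin.lastCases with
    | last => simpa using ⟨hA, hB⟩
    | cast i => simpa using hQP i
  · simp [Fin.sum_univ_castSucc, hGQP]

end homRank

section homogenize

variable {R : Type*} [CommRing R] {N d : ℕ}

lemma homogenize_eq_rename_add_X_mul [Nontrivial R] (hd : 0 < d) (H : MvPolynomial (Fin N) R) :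
    ∃ L : MvPolynomial (Fin (N + 1)) R, L.totalDegree < d ∧ homogenize d H =
      rename Fin.castSucc (homogeneousComponent d H) + X (Fin.last N) * L := by
  refine ⟨∑ k ∈ Finset.range d,
    X (Fin.last N) ^ (d - 1 - k) * rename Fin.castSucc (homogeneousComponent k H), ?_, ?_⟩
  · refine (totalDegree_finsetSum_le fun k hk => ?_).trans_lt (Nat.sub_lt hd one_pos)
    have hk : k < d := Finset.mem_range.mp hk
    have hdeg := (totalDegree_rename_le Fin.castSucc _).trans
      (homogeneousComponent_isHomogeneous k H).totalDegree_le
    grw [totalDegree_mul, totalDegree_X_pow, hdeg]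
    omega
  · rw [homogenize, Finset.sum_range_succ, Nat.sub_self d, pow_zero, one_mul,
      add_comm _ (rename _ _), Finset.mul_sum]
    congr 1
    refine Finset.sum_congr rfl fun k hk => ?_
    have hk : k < d := Finset.mem_range.mp hk
    rw [← mul_assoc, ← pow_succ', show d - 1 - k + 1 = d - k by omega]

lemma totalDegree_homogenize_le [Nontrivial R] (hd : 0 < d) (H : MvPolynomial (Fin N) R) :
    (homogenize d H).totalDegree ≤ d := by
  obtain ⟨L, hL, hH⟩ := homogenize_eq_rename_add_X_mul hd H
  rw [hH]
  refine (totalDegree_add _ _).trans (max_le ?_ ?_)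
  · exact (totalDegree_rename_le _ _).trans
      (homogeneousComponent_isHomogeneous d H).totalDegree_le
  · grw [totalDegree_mul, totalDegree_X]
    omega

lemma aeval_snoc_zero_homogenize [Nontrivial R] (hd : 0 < d) (H : MvPolynomial (Fin N) R) :
    aeval (Fin.snoc X 0 : Fin (N + 1) → MvPolynomial (Fin N) R) (homogenize d H) =
      homogeneousComponent d H := by
  obtain ⟨L, -, hH⟩ := homogenize_eq_rename_add_X_mul hd H
  rw [hH, map_add, map_mul, aeval_X, Fin.snoc_last, zero_mul, add_zero, aeval_rename]
  convert aeval_X_left_apply _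
  ext j : 1
  simp

end homogenize

theorem statement2_general (K : Type) [Field K] (N d : ℕ) (hd : 1 < d)
    (F : MvPolynomial (Fin N) K) (t : AlgebraicClosure K) :
    polyRank d F ≤
        homRank d (homogenize d
          (MvPolynomial.map (algebraMap K (AlgebraicClosure K)) F - C t)) ∧
      homRank d (homogenize d
          (MvPolynomial.map (algebraMap K (AlgebraicClosure K)) F - C t)) ≤
        polyRank d F + 1 := by
  set H := MvPolynomial.map (algebraMap K (AlgebraicClosure K)) F - C t
  set G := MvPolynomial.map (algebraMap K (AlgebraicClosure K)) (homogeneousComponent d F)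
  have hHG : homogeneousComponent d H = G := by
    rw [homogeneousComponent_sub_C (by omega), homogeneousComponent_map]
  have hG : G.totalDegree ≤ d := ((homogeneousComponent_isHomogeneous d F).map _).totalDegree_le
  obtain ⟨L, hL, hH⟩ := homogenize_eq_rename_add_X_mul (d := d) (by omega) H
  constructor
  · calc polyRank d F
        = homRank d (aeval (Fin.snoc X 0) (homogenize d H)) := by
          rw [aeval_snoc_zero_homogenize (by omega), hHG]; rfl
      _ ≤ homRank d (homogenize d H) :=
          homRank_map_le hd _ (totalDegree_aeval_le (Fin.lastCases (by simp) (by simp)))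
            (totalDegree_homogenize_le (by omega) H)
  · calc homRank d (homogenize d H)
        ≤ homRank d (rename Fin.castSucc G) + 1 := by
          rw [hH, hHG]
          exact homRank_add_mul_le hd ((totalDegree_rename_le _ _).trans hG)
            (by rw [totalDegree_X]; omega) hL
      _ ≤ polyRank d F + 1 :=
          Nat.add_le_add_right (homRank_map_le hd _ (totalDegree_rename_le _) hG) 1

/-- Let `F ∈ F_q[x_1, …, x_N]` have degree `d > 1`, let `t ∈ \bar{F_q}` and let `F̂_t` be the
homogenization of `F − t` with respect to the extra variable `Z`.  Then
`R(F) ≤ R(F̂_t) ≤ R(F) + 1`. -/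
theorem statement2 (K : Type) [Field K] [Fintype K] (N d : ℕ) (hd : 1 < d)
    (F : MvPolynomial (Fin N) K) (hdeg : F.totalDegree = d) (t : AlgebraicClosure K) :
    polyRank d F ≤
        homRank d (homogenize d
          (MvPolynomial.map (algebraMap K (AlgebraicClosure K)) F - C t)) ∧
      homRank d (homogenize d
          (MvPolynomial.map (algebraMap K (AlgebraicClosure K)) F - C t)) ≤
        polyRank d F + 1 :=
  statement2_general K N d hd F t
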